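/- A family of functions (X^x)_{x∈ℝ}, X^x : [0,∞) → ℝ, satisfying X^x(0) = x for all x, is time-homogeneous Markov (i.e., X^x(s) = X^y(t) implies X^x(s+h) = X^y(t+h) for all h ≥ 0) and each path is càdlàg of locally bounded variation if and only if each path is càdlàg and the jumps of every path are locally absolutely summable (∑_{0 < s ≤ T} |X^x(s) - X^x(s-)| < ∞ for every T > 0 and every x) and the family is time-homogeneous Markov. In particular, for such a family, local bounded variation of all paths is equivalent to local absolute summability of the jumps of all paths. -/

import Mathlib

/-!
Bounded variation always gives summable jumps: finitely many jumps are bounded by the variation.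

Conversely, on a path of a time-homogeneous Markov family, two visits of the same state at times
`a < b` make the path `(b - a)`-periodic from `a` on. Either these return gaps are bounded below
by some `p > 0`, and each level is visited at most `T / p + 1` times in `[0, T]`; or they are
arbitrarily small, and with right-continuity the path is constant from some time on and injective
until it first reaches that constant. So on the relevant interval each level is visited at most
`k` times, and Banach's indicatrix bound gives variation `≤ k * |range| + ∑ jumps`: an increment
of a partition that crosses the level `y` does so at a visit of `y` or by a jump over `y`.
-/

/-- The deterministic family `(X^x)` is time-homogeneous Markov. -/
def MarkovFam (X : ℝ → ℝ → ℝ) : Prop :=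
  ∀ x y s t : ℝ, 0 ≤ s → 0 ≤ t → X x s = X y t →
    ∀ h : ℝ, 0 ≤ h → X x (s + h) = X y (t + h)

/-- `f` is a càdlàg path on `[0,∞)`. -/
def CadlagPath (f : ℝ → ℝ) : Prop :=
  (∀ t : ℝ, 0 ≤ t → ContinuousWithinAt f (Set.Ici t) t) ∧
  (∀ t : ℝ, 0 < t → ∃ L : ℝ, Filter.Tendsto f (nhdsWithin t (Set.Iio t)) (nhds L))

open Filter Set Function MeasureTheory Topology
open scoped ENNReal

theorem BoundedVariationOn.tendsto_leftLim_of_mem_Ioc {f : ℝ → ℝ} {a b s : ℝ}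
    (hf : BoundedVariationOn f (Icc a b)) (hs : s ∈ Ioc a b) :
    Tendsto f (𝓝[<] s) (𝓝 (Function.leftLim f s)) := by
  obtain ⟨l, hl⟩ := hf.exists_tendsto_left s
  have hIco : Icc a b ∩ Iio s = Ico a s := by
    ext x; simp only [mem_inter_iff, mem_Icc, mem_Iio, mem_Ico]; grind
  rw [hIco, nhdsWithin_Ico_eq_nhdsLT hs.1] at hl
  rwa [leftLim_eq_of_tendsto hl]

theorem eVariationOn_Ico_add_edist_leftLim {f : ℝ → ℝ} {a s : ℝ} (has : a < s)
    (hf : Tendsto f (𝓝[<] s) (𝓝 (leftLim f s))) :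
    eVariationOn f (Ico a s) + edist (f s) (leftLim f s) = eVariationOn f (Icc a s) := by
  have hIco : Icc a s ∩ Iio s = Ico a s := by
    ext x; simp only [mem_inter_iff, mem_Icc, mem_Iio, mem_Ico]; grind
  have hIcc : Icc a s ∩ Iic s = Icc a s := inter_eq_left.2 fun _ hx => hx.2
  have key := eVariationOn.eVariationOn_on_inter_Iic_eq_Iio_add_edist (f := f) (s := Icc a s)
    (by rw [hIco, nhdsWithin_Ico_eq_nhdsLT has]; infer_instance)
    (right_mem_Icc.2 has.le) (hf.mono_left (nhdsWithin_mono _ inter_subset_right))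
  rwa [hIco, hIcc, eq_comm] at key

theorem sum_edist_leftLim_le_eVariationOn {f : ℝ → ℝ} {a b : ℝ}
    (hf : BoundedVariationOn f (Icc a b)) {F : Finset ℝ} (hF : ↑F ⊆ Ioc a b) :
    ∑ s ∈ F, edist (f s) (leftLim f s) ≤ eVariationOn f (Icc a b) := by
  induction F using Finset.induction_on_max generalizing b with
  | empty => simp
  | insert s G hGs ih =>
    have hs : s ∈ Ioc a b := hF (Finset.mem_insert_self s G)
    -- `G ⊆ (a, r]` with `r < s`, so the jumps in `G` only use the variation on `[a, s)`
    set r := (insert a G).max' (Finset.insert_nonempty a G)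
    have hrs : r < s := by
      rw [Finset.max'_lt_iff]
      simpa [hs.1] using hGs
    have hGr : ↑G ⊆ Ioc a r := fun x hx =>
      ⟨(hF (Finset.mem_insert_of_mem hx)).1, (insert a G).le_max' x (Finset.mem_insert_of_mem hx)⟩
    have hsG : s ∉ G := fun h => lt_irrefl s (hGs s h)
    calc ∑ x ∈ insert s G, edist (f x) (leftLim f x)
        = ∑ x ∈ G, edist (f x) (leftLim f x) + edist (f s) (leftLim f s) := by
          rw [Finset.sum_insert hsG, add_comm]
      _ ≤ eVariationOn f (Icc a r) + edist (f s) (leftLim f s) := by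
          gcongr
          exact ih (hf.mono (Icc_subset_Icc_right (hrs.le.trans hs.2))) hGr
      _ ≤ eVariationOn f (Ico a s) + edist (f s) (leftLim f s) := by
          gcongr
          exact eVariationOn.mono f (Icc_subset_Ico_right hrs)
      _ = eVariationOn f (Icc a s) :=
          eVariationOn_Ico_add_edist_leftLim hs.1 (hf.tendsto_leftLim_of_mem_Ioc hs)
      _ ≤ eVariationOn f (Icc a b) := eVariationOn.mono f (Icc_subset_Icc_right hs.2)

theorem BoundedVariationOn.summable_abs_sub_leftLim {f : ℝ → ℝ} {a b : ℝ}
    (hf : BoundedVariationOn f (Icc a b)) :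
    Summable (fun s : Ioc a b => |f s - Function.leftLim f s|) := by
  refine summable_of_sum_le (c := (eVariationOn f (Icc a b)).toReal)
    (fun _ => abs_nonneg _) fun F => ?_
  rw [← ENNReal.ofReal_le_iff_le_toReal hf, ENNReal.ofReal_sum_of_nonneg (fun _ _ => abs_nonneg _)]
  calc ∑ s ∈ F, ENNReal.ofReal |f s - Function.leftLim f s|
      = ∑ s ∈ F.map (Embedding.subtype _), edist (f s) (Function.leftLim f s) := by
        simp [Finset.sum_map, edist_dist, Real.dist_eq]
    _ ≤ eVariationOn f (Icc a b) :=
        sum_edist_leftLim_le_eVariationOn hf fun x hx => by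
          obtain ⟨y, -, rfl⟩ := Finset.mem_map.1 (Finset.mem_coe.1 hx)
          exact y.2

namespace CadlagPath

variable {f : ℝ → ℝ}

theorem tendsto_leftLim (hf : CadlagPath f) {t : ℝ} (ht : 0 < t) :
    Tendsto f (𝓝[<] t) (𝓝 (leftLim f t)) := by
  obtain ⟨L, hL⟩ := hf.2 t ht
  rwa [leftLim_eq_of_tendsto hL]

theorem neg (hf : CadlagPath f) : CadlagPath (-f) := by
  refine ⟨fun t ht => (hf.1 t ht).neg, fun t ht => ?_⟩
  obtain ⟨L, hL⟩ := hf.2 t ht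
  exact ⟨-L, hL.neg⟩

theorem leftLim_neg (hf : CadlagPath f) {t : ℝ} (ht : 0 < t) :
    leftLim (-f) t = -leftLim f t :=
  leftLim_eq_of_tendsto (hf.tendsto_leftLim ht).neg

theorem exists_bound (hf : CadlagPath f) (T : ℝ) : ∃ M, ∀ t ∈ Icc 0 T, |f t| ≤ M := by
  refine isCompact_Icc.induction_on (p := fun s => ∃ M, ∀ t ∈ s, |f t| ≤ M)
    ⟨0, by simp⟩ (fun s s' hss' ⟨M, hM⟩ => ⟨M, fun t ht => hM t (hss' ht)⟩)
    (fun s s' ⟨M, hM⟩ ⟨M', hM'⟩ => ⟨max M M', fun t ht => ht.elim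
      (fun h => (hM t h).trans (le_max_left _ _)) (fun h => (hM' t h).trans (le_max_right _ _))⟩)
    fun x hx => ?_
  have hright : ∀ᶠ t in 𝓝[≥] x, |f t| < |f x| + 1 :=
    (hf.1 x hx.1).tendsto.abs.eventually (gt_mem_nhds (lt_add_one _))
  have hleft : ∀ᶠ t in 𝓝[Ico 0 x] x, |f t| < |leftLim f x| + 1 := by
    rcases hx.1.eq_or_lt with rfl | hx0
    · simp
    · rw [nhdsWithin_Ico_eq_nhdsLT hx0]
      exact (hf.tendsto_leftLim hx0).abs.eventually (gt_mem_nhds (lt_add_one _))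
  have hnhds : 𝓝[Icc 0 T] x ≤ 𝓝[Ico 0 x] x ⊔ 𝓝[≥] x := by
    rw [← nhdsWithin_union]
    exact nhdsWithin_mono _ fun t ht => (lt_or_ge t x).imp (fun h => ⟨ht.1, h⟩) id
  have hbound : ∀ᶠ t in 𝓝[Icc 0 T] x, |f t| ≤ max (|leftLim f x| + 1) (|f x| + 1) :=
    hnhds (eventually_sup.2 ⟨hleft.mono fun t ht => ht.le.trans (le_max_left _ _),
      hright.mono fun t ht => ht.le.trans (le_max_right _ _)⟩)
  exact ⟨_, hbound, _, fun t ht => ht⟩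

/-- The last time `w` in `[s, t]` with `f w ≤ y` is where `f` crosses `y` upwards: either at `w`
itself or by a jump from `leftLim f w ≤ y` to `f w > y`. -/
theorem exists_mem_Ioc_mem_uIcc_of_lt_of_lt (hf : CadlagPath f) {s t y : ℝ} (hs : 0 ≤ s)
    (hst : s ≤ t) (hsy : f s < y) (hyt : y < f t) :
    ∃ w ∈ Ioc s t, y ∈ uIcc (leftLim f w) (f w) := by
  set A := {r ∈ Icc s t | f r ≤ y}
  have hsA : s ∈ A := ⟨left_mem_Icc.2 hst, hsy.le⟩
  have hA : IsLUB A (sSup A) := isLUB_csSup ⟨s, hsA⟩ ⟨t, fun r hr => hr.1.2⟩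
  set w := sSup A
  have hsw : s ≤ w := hA.1 hsA
  have hwt : w ≤ t := hA.2 fun r hr => hr.1.2
  have hyw : y ≤ f w := by
    rcases hwt.lt_or_eq with hwt | hwt
    · have habove : ∀ᶠ r in 𝓝[>] w, y ≤ f r := by
        filter_upwards [Ioo_mem_nhdsGT hwt] with r hr
        exact not_lt.1 fun hry => hr.1.not_ge (hA.1 ⟨⟨hsw.trans hr.1.le, hr.2.le⟩, hry.le⟩)
      exact ge_of_tendsto ((hf.1 w (hs.trans hsw)).tendsto.mono_left
        (nhdsWithin_mono _ Ioi_subset_Ici_self)) habove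
    · exact hwt ▸ hyt.le
  have hsw' : s < w := hsw.lt_of_ne fun h => (hsy.trans_le (h ▸ hyw)).false
  refine ⟨w, ⟨hsw', hwt⟩, ?_⟩
  by_cases hwy : f w ≤ y
  · exact le_antisymm hwy hyw ▸ right_mem_uIcc
  have hfreq : ∃ᶠ r in 𝓝[<] w, f r ≤ y := by
    have := frequently_nhdsWithin_iff.1 (hA.frequently_mem ⟨s, hsA⟩)
    refine frequently_nhdsWithin_iff.2 (this.mono fun r ⟨hrA, hrw⟩ => ⟨hrA.2, ?_⟩)
    exact (show r ≤ w from hrw).lt_of_ne fun h => hwy (h ▸ hrA.2)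
  exact mem_uIcc_of_le (le_of_tendsto_of_frequently (hf.tendsto_leftLim (hs.trans_lt hsw')) hfreq)
    (not_le.1 hwy).le

theorem exists_mem_Ioc_mem_uIcc_of_mem_uIoo (hf : CadlagPath f) {s t y : ℝ} (hs : 0 ≤ s)
    (hst : s ≤ t) (hy : y ∈ uIoo (f s) (f t)) :
    ∃ w ∈ Ioc s t, y ∈ uIcc (leftLim f w) (f w) := by
  rcases lt_or_ge (f s) (f t) with hlt | hge
  · rw [uIoo_of_le hlt.le] at hy
    exact hf.exists_mem_Ioc_mem_uIcc_of_lt_of_lt hs hst hy.1 hy.2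
  · rw [uIoo_of_ge hge] at hy
    obtain ⟨w, hw, hyw⟩ :=
      hf.neg.exists_mem_Ioc_mem_uIcc_of_lt_of_lt hs hst (neg_lt_neg hy.2) (neg_lt_neg hy.1)
    refine ⟨w, hw, ?_⟩
    rw [hf.leftLim_neg (hs.trans_lt hw.1), Pi.neg_apply, mem_uIcc] at hyw
    simp only [neg_le_neg_iff] at hyw
    exact mem_uIcc.2 (by tauto)

end CadlagPath

def jumpTimes (f : ℝ → ℝ) (T : ℝ) : Set ℝ := {w ∈ Ioc 0 T | f w ≠ leftLim f w}

theorem card_le_add_tsum_indicator_uIcc {f : ℝ → ℝ} {T y : ℝ} {k : ℕ}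
    (hk : (Icc 0 T ∩ f ⁻¹' {y}).encard ≤ k) {W : Finset ℝ}
    (hW : ∀ w ∈ W, w ∈ Ioc 0 T ∧ y ∈ uIcc (leftLim f w) (f w)) :
    (W.card : ℝ≥0∞) ≤ k + ∑' w : jumpTimes f T, (uIcc (leftLim f w) (f w)).indicator 1 y := by
  classical
  rw [← W.card_filter_add_card_filter_not (fun w => f w = y), Nat.cast_add]
  gcongr
  · have : ((W.filter (fun w => f w = y) : Finset ℝ) : Set ℝ).encard ≤ k :=
      (encard_le_encard fun w hw => by
        obtain ⟨hwW, hwy⟩ := Finset.mem_filter.1 hw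
        exact ⟨Ioc_subset_Icc_self (hW w hwW).1, hwy⟩).trans hk
    rw [encard_coe_eq_coe_finsetCard] at this
    exact_mod_cast this
  · rw [tsum_subtype (jumpTimes f T)
        fun w => (uIcc (leftLim f w) (f w)).indicator (1 : ℝ → ℝ≥0∞) y,
      Finset.card_eq_sum_ones, Nat.cast_sum, Nat.cast_one]
    refine le_trans (Finset.sum_le_sum fun w hw => ?_) (ENNReal.sum_le_tsum _)
    obtain ⟨hwW, hne⟩ := Finset.mem_filter.1 hw
    obtain ⟨hwT, hyw⟩ := hW w hwW
    have hjump : w ∈ jumpTimes f T :=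
      ⟨hwT, fun h => hne (by rw [← h, uIcc_self] at hyw; exact hyw.symm)⟩
    simp [indicator_of_mem hjump, indicator_of_mem hyw]

theorem CadlagPath.sum_indicator_uIoo_le {f : ℝ → ℝ} (hf : CadlagPath f) {T M y : ℝ} {k : ℕ}
    (hM : ∀ t ∈ Icc 0 T, |f t| ≤ M) (hk : (Icc 0 T ∩ f ⁻¹' {y}).encard ≤ k)
    {u : ℕ → ℝ} (hu : Monotone u) (huT : ∀ i, u i ∈ Icc 0 T) (n : ℕ) :
    ∑ i ∈ Finset.range n, (uIoo (f (u i)) (f (u (i + 1)))).indicator 1 y ≤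
      (Icc (-M) M).indicator (fun _ => (k : ℝ≥0∞)) y +
        ∑' w : jumpTimes f T, (uIcc (leftLim f w) (f w)).indicator 1 y := by
  classical
  set S := (Finset.range n).filter fun i => y ∈ uIoo (f (u i)) (f (u (i + 1)))
  have hS : ∑ i ∈ Finset.range n, (uIoo (f (u i)) (f (u (i + 1)))).indicator (1 : ℝ → ℝ≥0∞) y
      = S.card := by
    simp only [indicator_apply, Pi.one_apply, Finset.sum_boole, S]
  rcases S.eq_empty_or_nonempty with hS0 | ⟨i₀, hi₀⟩
  · simp [hS, hS0]
  have hyM : y ∈ Icc (-M) M := by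
    have hmem : ∀ i, f (u i) ∈ Icc (-M) M := fun i => abs_le.1 (hM _ (huT i))
    exact uIcc_subset_Icc (hmem _) (hmem _) (uIoo_subset_uIcc_self (Finset.mem_filter.1 hi₀).2)
  have hcross : ∀ i ∈ S, ∃ w ∈ Ioc (u i) (u (i + 1)), y ∈ uIcc (leftLim f w) (f w) :=
    fun i hi => hf.exists_mem_Ioc_mem_uIcc_of_mem_uIoo (huT i).1 (hu i.le_succ)
      (Finset.mem_filter.1 hi).2
  choose! w hwu hwy using hcross
  have hw : StrictMonoOn w S := fun i hi j hj hij =>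
    ((hwu i hi).2.trans (hu hij)).trans_lt (hwu j hj).1
  rw [hS, indicator_of_mem hyM, ← Finset.card_image_of_injOn hw.injOn]
  refine card_le_add_tsum_indicator_uIcc hk fun v hv => ?_
  obtain ⟨i, hi, rfl⟩ := Finset.mem_image.1 hv
  exact ⟨⟨(huT i).1.trans_lt (hwu i hi).1, (hwu i hi).2.trans (huT (i + 1)).2⟩, hwy i hi⟩

/-- Banach's indicatrix bound: the increments of a partition are integrated over the levels they
cross. -/
theorem CadlagPath.eVariationOn_le {f : ℝ → ℝ} (hf : CadlagPath f) {T M : ℝ} {k : ℕ}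
    (hM : ∀ t ∈ Icc 0 T, |f t| ≤ M) (hk : ∀ y, (Icc 0 T ∩ f ⁻¹' {y}).encard ≤ k)
    (hD : (jumpTimes f T).Countable) :
    eVariationOn f (Icc 0 T) ≤
      k * volume (Icc (-M) M) + ∑' w : jumpTimes f T, ENNReal.ofReal |f w - leftLim f w| := by
  have := hD.to_subtype
  have hIoo : ∀ a b : ℝ, MeasurableSet (uIoo a b) := fun _ _ => measurableSet_Ioo
  refine iSup_le fun ⟨n, u, hu, huT⟩ => ?_
  calc ∑ i ∈ Finset.range n, edist (f (u (i + 1))) (f (u i))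
      = ∑ i ∈ Finset.range n, ∫⁻ y, (uIoo (f (u i)) (f (u (i + 1)))).indicator 1 y := by
        refine Finset.sum_congr rfl fun i _ => ?_
        rw [lintegral_indicator_one (hIoo _ _), Real.volume_uIoo, edist_dist,
          Real.dist_eq]
    _ = ∫⁻ y, ∑ i ∈ Finset.range n, (uIoo (f (u i)) (f (u (i + 1)))).indicator 1 y :=
        (lintegral_finsetSum _ fun _ _ => measurable_one.indicator (hIoo _ _)).symm
    _ ≤ ∫⁻ y, ((Icc (-M) M).indicator (fun _ => (k : ℝ≥0∞)) y +
          ∑' w : jumpTimes f T, (uIcc (leftLim f w) (f w)).indicator 1 y) :=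
        lintegral_mono fun y => hf.sum_indicator_uIoo_le hM (hk y) hu huT n
    _ = k * volume (Icc (-M) M) + ∑' w : jumpTimes f T, ENNReal.ofReal |f w - leftLim f w| := by
        rw [lintegral_add_left (measurable_const.indicator measurableSet_Icc),
          lintegral_indicator_const measurableSet_Icc,
          lintegral_tsum fun _ => (measurable_one.indicator measurableSet_uIcc).aemeasurable]
        simp_rw [lintegral_indicator_one measurableSet_uIcc, Real.volume_interval]

theorem CadlagPath.boundedVariationOn_of_encard_le {f : ℝ → ℝ} (hf : CadlagPath f) {T : ℝ}
    {k : ℕ} (hsum : Summable fun s : Ioc (0 : ℝ) T => |f s - leftLim f s|)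
    (hk : ∀ y, (Icc 0 T ∩ f ⁻¹' {y}).encard ≤ k) :
    BoundedVariationOn f (Icc 0 T) := by
  obtain ⟨M, hM⟩ := hf.exists_bound T
  have hD : (jumpTimes f T).Countable := by
    refine (hsum.countable_support.image Subtype.val).mono fun w hw => ?_
    exact ⟨⟨w, hw.1⟩, by simpa [sub_eq_zero] using hw.2, rfl⟩
  have hjumps : ∑' w : jumpTimes f T, ENNReal.ofReal |f w - leftLim f w| ≠ ⊤ := by
    refine ne_top_of_le_ne_top (b := ENNReal.ofReal (∑' s : Ioc (0 : ℝ) T, |f s - leftLim f s|))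
      ENNReal.ofReal_ne_top ?_
    rw [ENNReal.ofReal_tsum_of_nonneg (fun _ => abs_nonneg _) hsum]
    exact ENNReal.tsum_comp_le_tsum_of_injective (inclusion_injective (sep_subset _ _))
      fun s : Ioc (0 : ℝ) T => ENNReal.ofReal |f s - leftLim f s|
  refine ne_top_of_le_ne_top ?_ (hf.eVariationOn_le hM hk hD)
  exact ENNReal.add_ne_top.2 ⟨ENNReal.mul_ne_top (by simp) (by simp), hjumps⟩

theorem encard_le_of_forall_le_sub {S : Set ℝ} {T p : ℝ} (hp : 0 < p) (hS : S ⊆ Icc 0 T)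
    (hsep : ∀ a ∈ S, ∀ b ∈ S, a < b → p ≤ b - a) : S.encard ≤ (⌊T / p⌋₊ + 1 : ℕ) := by
  have hfloor : StrictMonoOn (fun t => ⌊t / p⌋₊) S := fun a ha b hb hab => by
    have hab' : a / p + 1 ≤ b / p := by
      rw [div_add_one hp.ne', div_le_div_iff_of_pos_right hp]
      linarith [hsep a ha b hb hab]
    calc ⌊a / p⌋₊ < ⌊a / p⌋₊ + 1 := lt_add_one _
      _ = ⌊a / p + 1⌋₊ := (Nat.floor_add_one (div_nonneg (hS ha).1 hp.le)).symm
      _ ≤ ⌊b / p⌋₊ := Nat.floor_le_floor hab'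
  have hmaps : MapsTo (fun t => ⌊t / p⌋₊) S (Finset.range (⌊T / p⌋₊ + 1) : Set ℕ) :=
    fun t ht => by
      simpa [Nat.lt_succ_iff] using Nat.floor_le_floor (div_le_div_of_nonneg_right (hS ht).2 hp.le)
  have := encard_le_encard_of_injOn hmaps hfloor.injOn
  rwa [encard_coe_eq_coe_finsetCard, Finset.card_range] at this

theorem apply_add_nat_mul_eq {f : ℝ → ℝ} {s g : ℝ} (hg : 0 ≤ g)
    (h : ∀ w, s ≤ w → f (w + g) = f w) (n : ℕ) {w : ℝ} (hw : s ≤ w) : f (w + n * g) = f w := by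
  induction n generalizing w with
  | zero => simp
  | succ n ih =>
    have hwn : s ≤ w + n * g := hw.trans (le_add_of_nonneg_right (by positivity))
    rw [Nat.cast_succ, add_one_mul, ← add_assoc, h _ hwn, ih hw]

def MarkovPath (f : ℝ → ℝ) : Prop :=
  ∀ s t, 0 ≤ s → 0 ≤ t → f s = f t → ∀ h, 0 ≤ h → f (s + h) = f (t + h)

theorem MarkovFam.markovPath {X : ℝ → ℝ → ℝ} (hX : MarkovFam X) (x : ℝ) : MarkovPath (X x) :=
  fun s t => hX x x s t

namespace MarkovPath

variable {f : ℝ → ℝ}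

theorem apply_add_sub_eq (hf : MarkovPath f) {a b : ℝ} (ha : 0 ≤ a) (hab : a ≤ b) (hfab : f a = f b)
    {w : ℝ} (hw : a ≤ w) : f (w + (b - a)) = f w := by
  have := hf b a (ha.trans hab) ha hfab.symm (w - a) (by linarith)
  rwa [show b + (w - a) = w + (b - a) by ring, add_sub_cancel] at this

theorem exists_forall_ge_eq_of_small_returns (hf : MarkovPath f) (hc : CadlagPath f)
    (hsmall : ∀ ε > 0, ∃ a b, 0 ≤ a ∧ a < b ∧ f a = f b ∧ b - a < ε) :
    ∃ s, 0 ≤ s ∧ ∀ w, s ≤ w → f w = f s := by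
  obtain ⟨s, b₁, hs, hsb, hfs, -⟩ := hsmall 1 one_pos
  have hper₁ := fun w (hw : s ≤ w) => hf.apply_add_sub_eq hs hsb.le hfs hw
  -- every return gap is a period on `[s, ∞)`: shift far enough by the period `b₁ - s` first
  have hper : ∀ a b, 0 ≤ a → a < b → f a = f b → ∀ w, s ≤ w → f (w + (b - a)) = f w := by
    intro a b ha hab hfab w hw
    obtain ⟨n, hn⟩ := Archimedean.arch (a - w) (sub_pos.2 hsb)
    rw [nsmul_eq_mul] at hn
    calc f (w + (b - a))
        = f (w + (b - a) + n * (b₁ - s)) :=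
          (apply_add_nat_mul_eq (sub_pos.2 hsb).le hper₁ n (by linarith)).symm
      _ = f (w + n * (b₁ - s) + (b - a)) := by ring_nf
      _ = f (w + n * (b₁ - s)) := hf.apply_add_sub_eq ha hab.le hfab (by linarith)
      _ = f w := apply_add_nat_mul_eq (sub_pos.2 hsb).le hper₁ n hw
  -- arbitrarily small periods reach every `[w, w + ε)`, and `f` is right-continuous
  refine ⟨s, hs, fun w hw => ?_⟩
  refine tendsto_nhds_unique_of_frequently_eq (hc.1 w (hs.trans hw)).tendsto tendsto_const_nhds ?_
  rw [frequently_iff]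
  intro U hU
  obtain ⟨v, hwv, hvU⟩ := mem_nhdsGE_iff_exists_Ico_subset.1 hU
  obtain ⟨a, b, ha, hab, hfab, hba⟩ := hsmall (v - w) (sub_pos.2 hwv)
  set m := ⌈(w - s) / (b - a)⌉₊
  have hg : 0 < b - a := sub_pos.2 hab
  have hm₁ : w - s ≤ m * (b - a) := (div_le_iff₀ hg).1 (Nat.le_ceil _)
  have hm₂ : m * (b - a) < w - s + (b - a) := by
    have := Nat.ceil_lt_add_one (div_nonneg (sub_nonneg.2 hw) hg.le)
    rwa [div_add_one hg.ne', lt_div_iff₀ hg] at this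
  refine ⟨s + m * (b - a), hvU ⟨by linarith, by linarith⟩, ?_⟩
  exact apply_add_nat_mul_eq hg.le (hper a b ha hab hfab) m le_rfl

theorem exists_injOn_Icc_of_forall_ge_eq (hf : MarkovPath f) (hc : CadlagPath f) {s : ℝ}
    (hs : 0 ≤ s) (hconst : ∀ w, s ≤ w → f w = f s) :
    ∃ τ, 0 ≤ τ ∧ InjOn f (Icc 0 τ) ∧ ∀ t, τ ≤ t → f t = f τ := by
  set Z := {t | 0 ≤ t ∧ f t = f s}
  have hZ : IsGLB Z (sInf Z) := isGLB_csInf ⟨s, hs, rfl⟩ ⟨0, fun t ht => ht.1⟩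
  set τ := sInf Z
  have hτ : 0 ≤ τ := hZ.2 fun t ht => ht.1
  have hfτ : f τ = f s := by
    have := ((hc.1 τ hτ).mono fun t ht => hZ.1 ht).mem_closure_image (hZ.mem_closure ⟨s, hs, rfl⟩)
    simpa using closure_mono (image_subset_iff.2 fun t ht => ht.2 : f '' Z ⊆ {f s}) this
  have hnoret : ∀ a ∈ Icc 0 τ, ∀ b ∈ Icc 0 τ, f a = f b → ¬a < b := by
    intro a ha b hb hfab hab
    -- a return at `a < b` makes `f` periodic from `a`, so `f a` is the absorbing value
    obtain ⟨n, hn⟩ := Archimedean.arch (s - a) (sub_pos.2 hab)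
    rw [nsmul_eq_mul] at hn
    have hfa : f a = f s := by
      rw [← apply_add_nat_mul_eq (sub_pos.2 hab).le
        (fun w hw => hf.apply_add_sub_eq ha.1 hab.le hfab hw) n le_rfl, hconst _ (by linarith)]
    exact (hZ.1 ⟨ha.1, hfa⟩).not_gt (hab.trans_le hb.2)
  refine ⟨τ, hτ, fun a ha b hb hfab => le_antisymm (not_lt.1 (hnoret b hb a ha hfab.symm))
    (not_lt.1 (hnoret a ha b hb hfab)), fun t ht => ?_⟩
  have := hf τ s hτ hs hfτ (t - τ) (sub_nonneg.2 ht)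
  rw [add_sub_cancel] at this
  rw [this, hconst _ (le_add_of_nonneg_right (sub_nonneg.2 ht)), hfτ]

theorem returns_separated_or_absorbed (hf : MarkovPath f) (hc : CadlagPath f) :
    (∃ p > 0, ∀ a b, 0 ≤ a → a < b → f a = f b → p ≤ b - a) ∨
      ∃ τ, 0 ≤ τ ∧ InjOn f (Icc 0 τ) ∧ ∀ t, τ ≤ t → f t = f τ := by
  by_cases h : ∃ p > 0, ∀ a b, 0 ≤ a → a < b → f a = f b → p ≤ b - a
  · exact Or.inl h
  push Not at h
  obtain ⟨s, hs, hconst⟩ := hf.exists_forall_ge_eq_of_small_returns hc h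
  exact Or.inr (hf.exists_injOn_Icc_of_forall_ge_eq hc hs hconst)

end MarkovPath

theorem MarkovPath.boundedVariationOn {f : ℝ → ℝ} (hf : MarkovPath f) (hc : CadlagPath f) {T : ℝ}
    (hsum : Summable fun s : Ioc (0 : ℝ) T => |f s - leftLim f s|) :
    BoundedVariationOn f (Icc 0 T) := by
  rcases hf.returns_separated_or_absorbed hc with ⟨p, hp, hsep⟩ | ⟨τ, hτ, hinj, hconst⟩
  · exact hc.boundedVariationOn_of_encard_le hsum fun y => encard_le_of_forall_le_sub hp
      inter_subset_left fun a ha b hb hab => hsep a b ha.1.1 hab (ha.2.trans hb.2.symm)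
  have hfiber : ∀ τ' ≤ τ, ∀ y, (Icc 0 τ' ∩ f ⁻¹' {y}).encard ≤ (1 : ℕ) := fun τ' hτ' y => by
    rw [Nat.cast_one, encard_le_one_iff]
    exact fun a b ha hb => hinj (Icc_subset_Icc_right hτ' ha.1) (Icc_subset_Icc_right hτ' hb.1)
      (ha.2.trans hb.2.symm)
  rcases le_total T τ with hTτ | hτT
  · exact hc.boundedVariationOn_of_encard_le hsum (hfiber T hTτ)
  have hsumτ : Summable fun s : Ioc (0 : ℝ) τ => |f s - leftLim f s| :=
    hsum.comp_injective (i := inclusion (Ioc_subset_Ioc_right hτT)) (inclusion_injective _)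
  have hbefore : BoundedVariationOn f (Icc 0 τ) :=
    hc.boundedVariationOn_of_encard_le hsumτ (hfiber τ le_rfl)
  have hafter : eVariationOn f (Icc τ T) = 0 := eVariationOn.constant_on
    ((subsingleton_singleton (a := f τ)).anti (image_subset_iff.2 fun t ht => hconst t ht.1))
  have hsplit := eVariationOn.Icc_add_Icc f hτ hτT (mem_univ τ)
  simp only [univ_inter, hafter, add_zero] at hsplit
  rwa [BoundedVariationOn, ← hsplit]

theorem stmt7_general (X : ℝ → ℝ → ℝ) :
    (MarkovFam X ∧ (∀ x, CadlagPath (X x)) ∧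
        (∀ x T : ℝ, 0 < T → BoundedVariationOn (X x) (Set.Icc 0 T)))
    ↔ ((∀ x, CadlagPath (X x)) ∧
        (∀ x T : ℝ, 0 < T →
          Summable (fun s : Set.Ioc (0:ℝ) T => |X x s - Function.leftLim (X x) s|)) ∧
        MarkovFam X) := by
  constructor
  · rintro ⟨hM, hc, hbv⟩
    exact ⟨hc, fun x T hT => (hbv x T hT).summable_abs_sub_leftLim, hM⟩
  · rintro ⟨hc, hsum, hM⟩
    exact ⟨hM, hc, fun x T hT => (hM.markovPath x).boundedVariationOn (hc x) (hsum x T hT)⟩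

theorem stmt7 (X : ℝ → ℝ → ℝ) (h0 : ∀ x, X x 0 = x) :
    (MarkovFam X ∧ (∀ x, CadlagPath (X x)) ∧
        (∀ x T : ℝ, 0 < T → BoundedVariationOn (X x) (Set.Icc 0 T)))
    ↔ ((∀ x, CadlagPath (X x)) ∧
        (∀ x T : ℝ, 0 < T →
          Summable (fun s : Set.Ioc (0:ℝ) T => |X x s - Function.leftLim (X x) s|)) ∧
        MarkovFam X) :=
  stmt7_general X
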